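/- Let n be a positive integer. Then: (1) the symmetric Werner–Holevo channel Φ₀ on M_n has mixed-unitary rank equal to n(n+1)/2 if and only if there exists an orthogonal basis of the space of symmetric matrices S_n = {A ∈ M_n : Aᵀ = A} consisting entirely of unitary matrices; (2) if n is even, the anti-symmetric Werner–Holevo channel Φ₁ on M_n has mixed-unitary rank equal to n(n−1)/2 if and only if there exists an orthogonal basis of the space of skew-symmetric matrices K_n = {A ∈ M_n : Aᵀ = −A} consisting entirely of unitary matrices. -/

import Mathlib

open scoped Kronecker ComplexOrder
open Matrix

/-- Square complex matrices indexed by `α`. -/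
abbrev Mat (α : Type*) := Matrix α α ℂ

/-- The Choi matrix `J(Φ) = ∑_{j,k} Φ(E_{j,k}) ⊗ E_{j,k}` of a linear map between
matrix spaces. -/
noncomputable def choiMatrix {α β : Type*} [Fintype α] [DecidableEq α]
    (Φ : Mat α →ₗ[ℂ] Mat β) : Matrix (β × α) (β × α) ℂ :=
  ∑ j : α, ∑ k : α, (Φ (Matrix.single j k 1)) ⊗ₖ (Matrix.single j k 1)

/-- The Choi rank of a linear map: the rank of its Choi matrix. -/
noncomputable def choiRank {α β : Type*} [Fintype α] [DecidableEq α] [Fintype β]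
    (Φ : Mat α →ₗ[ℂ] Mat β) : ℕ :=
  (choiMatrix Φ).rank

/-- `A` is a Kraus representation of `Φ` (with the trace-preservation condition). -/
def IsKrausRep {α β : Type*} [Fintype α] [DecidableEq α] [Fintype β] {r : ℕ}
    (Φ : Mat α →ₗ[ℂ] Mat β) (A : Fin r → Matrix β α ℂ) : Prop :=
  (∀ X, Φ X = ∑ k, A k * X * (A k)ᴴ) ∧ (∑ k, (A k)ᴴ * A k = 1)

/-- A quantum channel: a linear map admitting a Kraus representation
`Φ(X) = ∑ₖ Aₖ X Aₖ*` with `∑ₖ Aₖ* Aₖ = 1`. -/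
def IsChannel {α β : Type*} [Fintype α] [DecidableEq α] [Fintype β]
    (Φ : Mat α →ₗ[ℂ] Mat β) : Prop :=
  ∃ (r : ℕ) (A : Fin r → Matrix β α ℂ), IsKrausRep Φ A

/-- The dimension of the operator system `span{Aⱼᴴ Aₖ}` generated by a Kraus family. -/
noncomputable def krausOpSystemDim {α β : Type*} [Fintype α] [Fintype β] {r : ℕ}
    (A : Fin r → Matrix β α ℂ) : ℕ :=
  Module.finrank ℂ (Submodule.span ℂ {M : Mat α | ∃ j k, M = (A j)ᴴ * A k})

/-- A mixed-unitary decomposition of `Φ` with `N` terms: a probability vector `p`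
and unitaries `U` with `Φ(X) = ∑ₖ pₖ Uₖ X Uₖ*`. -/
def IsMixedUnitaryDecomp {α : Type*} [Fintype α] [DecidableEq α] {N : ℕ}
    (Φ : Mat α →ₗ[ℂ] Mat α) (p : Fin N → ℝ) (U : Fin N → Mat α) : Prop :=
  (∀ k, 0 ≤ p k) ∧ (∑ k, p k = 1) ∧ (∀ k, U k ∈ Matrix.unitaryGroup α ℂ) ∧
    (∀ X, Φ X = ∑ k, (p k : ℂ) • (U k * X * (U k)ᴴ))

/-- `Φ` is a mixed-unitary channel. -/
def IsMixedUnitary {α : Type*} [Fintype α] [DecidableEq α]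
    (Φ : Mat α →ₗ[ℂ] Mat α) : Prop :=
  ∃ (N : ℕ) (p : Fin N → ℝ) (U : Fin N → Mat α), IsMixedUnitaryDecomp Φ p U

/-- The mixed-unitary rank: the minimum number of unitary conjugations in a
mixed-unitary decomposition. -/
noncomputable def mixedUnitaryRank {α : Type*} [Fintype α] [DecidableEq α]
    (Φ : Mat α →ₗ[ℂ] Mat α) : ℕ :=
  sInf {N : ℕ | ∃ (p : Fin N → ℝ) (U : Fin N → Mat α), IsMixedUnitaryDecomp Φ p U}

/-- A mixed-unitary decomposition is the *unique* mixed-unitary decomposition of `Φ` if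
every other mixed-unitary decomposition of `Φ` arises by partitioning its terms into
groups of phase-multiples of the `Uₖ` with matching total probabilities. -/
def IsUniqueMixedUnitaryDecomp {α : Type*} [Fintype α] [DecidableEq α] {N : ℕ}
    (Φ : Mat α →ₗ[ℂ] Mat α) (p : Fin N → ℝ) (U : Fin N → Mat α) : Prop :=
  IsMixedUnitaryDecomp Φ p U ∧
    ∀ (t : ℕ) (q : Fin t → ℝ) (V : Fin t → Mat α), IsMixedUnitaryDecomp Φ q V →
      ∃ T : Fin t → Fin N,
        (∀ j, ∃ c : ℂ, ‖c‖ = 1 ∧ V j = c • U (T j)) ∧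
        (∀ k, p k = ∑ j ∈ Finset.univ.filter (fun j => T j = k), q j)

/-- `Φ` possesses a unique mixed-unitary decomposition. -/
def HasUniqueMixedUnitaryDecomp {α : Type*} [Fintype α] [DecidableEq α]
    (Φ : Mat α →ₗ[ℂ] Mat α) : Prop :=
  ∃ (N : ℕ) (p : Fin N → ℝ) (U : Fin N → Mat α), IsUniqueMixedUnitaryDecomp Φ p U

/-- `Ψ : M_α → M_N` is complementary to `Φ : M_α → M_α`: there is a Kraus representation
`Φ(X) = ∑ₖ Bₖ X Bₖ*` with `N` terms such that `Ψ(X)` has `(j,k)` entry `⟨Bₖ* Bⱼ, X⟩`. -/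
def IsComplementary {α : Type*} [Fintype α] [DecidableEq α] {N : ℕ}
    (Φ : Mat α →ₗ[ℂ] Mat α) (Ψ : Mat α →ₗ[ℂ] Mat (Fin N)) : Prop :=
  ∃ B : Fin N → Mat α, IsKrausRep Φ B ∧
    ∀ X, Ψ X = Matrix.of fun j k => ((((B k)ᴴ * B j)ᴴ) * X).trace

/-- A unitary channel: conjugation by a fixed unitary matrix. -/
def IsUnitaryChannel {α : Type*} [Fintype α] [DecidableEq α]
    (Ψ : Mat α →ₗ[ℂ] Mat α) : Prop :=
  ∃ U ∈ Matrix.unitaryGroup α ℂ, ∀ X, Ψ X = U * X * Uᴴ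

/-- A correlation matrix: positive semidefinite with unit diagonal. -/
def IsCorrelation {α : Type*} [Fintype α] (C : Mat α) : Prop :=
  C.PosSemidef ∧ ∀ i, C i i = 1

/-- A toroidal decomposition of `C` with `N` terms: `C = ∑ₖ pₖ uₖ uₖ*` where each `uₖ`
has all entries of modulus one. -/
def IsToroidalDecomp {α : Type*} [Fintype α] {N : ℕ}
    (C : Mat α) (p : Fin N → ℝ) (u : Fin N → α → ℂ) : Prop :=
  (∀ k, 0 ≤ p k) ∧ (∑ k, p k = 1) ∧ (∀ k i, ‖u k i‖ = 1) ∧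
    C = ∑ k, (p k : ℂ) • Matrix.vecMulVec (u k) (star (u k))

/-- A correlation matrix is toroidal if it is a convex combination of rank-one
correlation matrices `u u*` with `u` having unimodular entries. -/
def IsToroidal {α : Type*} [Fintype α] (C : Mat α) : Prop :=
  ∃ (N : ℕ) (p : Fin N → ℝ) (u : Fin N → α → ℂ), IsToroidalDecomp C p u

/-- The toroidal rank of a correlation matrix. -/
noncomputable def toroidalRank {α : Type*} [Fintype α] (C : Mat α) : ℕ :=
  sInf {N : ℕ | ∃ (p : Fin N → ℝ) (u : Fin N → α → ℂ), IsToroidalDecomp C p u}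


/-!
Write `Φ(X) = c (Tr X · 1 + σ Xᵀ)` with `σ = ±1`, and let `S_σ = {A | Aᵀ = σ A}`. Comparing
matrix entries, `Φ(X) = ∑ₖ pₖ Uₖ X Uₖ*` holds iff the frame operator `A ↦ ∑ₖ pₖ ⟨Uₖ, A⟩ Uₖ`
equals `c (A + σ Aᵀ)`, which is `2c` times the projection onto `S_σ`. Hence the `Uₖ` with
`pₖ ≠ 0` span `S_σ`, so every decomposition has at least `dim S_σ = n(n + σ)/2` terms.
Pairing the frame identity with an element of `S_{-σ}` gives a sum of nonnegative terms
`pₖ |⟨Uₖ, B⟩|²` that vanishes, which forces every `Uₖ` with `pₖ > 0` into `S_σ`. In a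
decomposition with exactly `dim S_σ` terms the `Uₖ` therefore form a basis of `S_σ`, and the
frame identity applied to `Uₖ` makes them orthogonal. Conversely, for an orthogonal basis of
`S_σ` made of unitaries, the uniform weights satisfy the frame identity because `‖Uₖ‖² = n`
and `2c · dim S_σ = n`.
-/

def transposeEigenspace (α : Type*) (σ : ℂ) : Submodule ℂ (Mat α) :=
  Module.End.eigenspace (transposeLinearEquiv α α ℂ ℂ).toLinearMap σ

lemma mem_transposeEigenspace {α : Type*} {σ : ℂ} {A : Mat α} :
    A ∈ transposeEigenspace α σ ↔ Aᵀ = σ • A :=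
  Module.End.mem_eigenspace_iff

lemma add_smul_transpose_mem_transposeEigenspace {α : Type*} {σ : ℂ} (hσ : σ * σ = 1)
    (A : Mat α) : A + σ • Aᵀ ∈ transposeEigenspace α σ := by
  rw [mem_transposeEigenspace, transpose_add, transpose_smul, transpose_transpose, smul_add,
    smul_smul, hσ, one_smul, add_comm]

lemma star_eq_self_of_mul_self_eq_one {σ : ℂ} (hσ : σ * σ = 1) : star σ = σ := by
  rcases mul_self_eq_one_iff.mp hσ with rfl | rfl <;> simp

section TraceForm
variable {α : Type*} [Fintype α]

lemma star_trace_conjTranspose_mul (A B : Mat α) : star (Aᴴ * B).trace = (Bᴴ * A).trace := by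
  rw [← trace_conjTranspose, conjTranspose_mul, conjTranspose_conjTranspose]

lemma trace_conjTranspose_mul_transpose (A B : Mat α) :
    (Aᴴ * Bᵀ).trace = (Aᵀᴴ * B).trace := by
  rw [← trace_transpose, transpose_mul, transpose_transpose, trace_mul_comm,
    conjTranspose_transpose_eq_transpose_conjTranspose]

lemma trace_conjTranspose_mul_transpose_of_mem_transposeEigenspace {σ : ℂ} {V : Mat α}
    (hσ : σ * σ = 1) (hV : V ∈ transposeEigenspace α σ) (A : Mat α) :
    (Vᴴ * Aᵀ).trace = σ * (Vᴴ * A).trace := by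
  rw [trace_conjTranspose_mul_transpose, mem_transposeEigenspace.mp hV, conjTranspose_smul,
    smul_mul_assoc, trace_smul, star_eq_self_of_mul_self_eq_one hσ, smul_eq_mul]

lemma trace_conjTranspose_mul_self_of_mem_unitaryGroup [DecidableEq α] {U : Mat α}
    (hU : U ∈ unitaryGroup α ℂ) : (Uᴴ * U).trace = Fintype.card α := by
  rw [← star_eq_conjTranspose, mem_unitaryGroup_iff'.mp hU, trace_one]

lemma sum_trace_smul_eq_smul_of_mem_span {ι : Type*} [Fintype ι] {U : ι → Mat α} {d : ℂ}
    (horth : ∀ j k, j ≠ k → ((U j)ᴴ * U k).trace = 0) (hnorm : ∀ k, ((U k)ᴴ * U k).trace = d)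
    {B : Mat α} (hB : B ∈ Submodule.span ℂ (Set.range U)) :
    ∑ m, ((U m)ᴴ * B).trace • U m = d • B := by
  classical
  obtain ⟨a, rfl⟩ := (Submodule.mem_span_range_iff_exists_fun ℂ).mp hB
  have hcoef : ∀ m, ((U m)ᴴ * ∑ k, a k • U k).trace = d * a m := by
    intro m
    simp only [Matrix.mul_sum, Matrix.mul_smul, trace_sum, trace_smul, smul_eq_mul]
    rw [Finset.sum_eq_single m (fun k _ hkm => by rw [horth m k (Ne.symm hkm), mul_zero])
      (by simp), hnorm, mul_comm]
  simp only [hcoef, Finset.smul_sum, smul_smul]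

end TraceForm

section Tensor
variable {α ι : Type*} [Fintype α] [Fintype ι]

def frameOperator (p : ι → ℝ) (U : ι → Mat α) (A : Mat α) : Mat α :=
  ∑ m, (p m : ℂ) • (((U m)ᴴ * A).trace • U m)

lemma sum_smul_mul_mul_conjTranspose_apply (p : ι → ℝ) (U : ι → Mat α) (X : Mat α) (i k : α) :
    (∑ m, (p m : ℂ) • (U m * X * (U m)ᴴ)) i k =
      ∑ j, ∑ l, X j l * ∑ m, p m * (U m i j * star (U m k l)) := by
  simp only [Matrix.sum_apply, Matrix.smul_apply, mul_apply, conjTranspose_apply, smul_eq_mul,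
    Finset.mul_sum, Finset.sum_mul]
  conv_rhs => rw [Finset.sum_comm]
  rw [Finset.sum_comm]
  refine Finset.sum_congr rfl fun _ _ => ?_
  rw [Finset.sum_comm]
  exact Finset.sum_congr rfl fun _ _ => Finset.sum_congr rfl fun _ _ => by ring

lemma frameOperator_apply (p : ι → ℝ) (U : ι → Mat α) (A : Mat α) (i j : α) :
    frameOperator p U A i j = ∑ k, ∑ l, A k l * ∑ m, p m * (U m i j * star (U m k l)) := by
  simp only [frameOperator, Matrix.sum_apply, Matrix.smul_apply, trace, diag, mul_apply,
    conjTranspose_apply, smul_eq_mul, Finset.mul_sum, Finset.sum_mul]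
  conv_rhs => rw [Finset.sum_comm]
  rw [Finset.sum_comm]
  refine Finset.sum_congr rfl fun _ _ => ?_
  rw [Finset.sum_comm]
  exact Finset.sum_congr rfl fun _ _ => Finset.sum_congr rfl fun _ _ => by ring

variable [DecidableEq α]

lemma forall_sum_sum_mul_eq_iff {F G : α → α → ℂ} :
    (∀ X : Mat α, ∑ j, ∑ l, X j l * F j l = ∑ j, ∑ l, X j l * G j l) ↔ F = G := by
  refine ⟨fun h => funext₂ fun j l => ?_, fun h _ => h ▸ rfl⟩
  simpa [single_apply, ite_and] using h (single j l 1)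

lemma smul_trace_smul_one_add_smul_transpose_apply (c σ : ℂ) (X : Mat α) (i k : α) :
    (c • (X.trace • (1 : Mat α) + σ • Xᵀ)) i k =
      ∑ j, ∑ l, X j l * (c * ((1 : Mat α) i k * (1 : Mat α) j l +
        σ * ((1 : Mat α) i l * (1 : Mat α) j k))) := by
  simp [one_apply, trace, mul_add, Finset.sum_add_distrib, mul_ite, Finset.mul_sum, mul_comm,
    mul_left_comm]

lemma smul_add_smul_transpose_apply (c σ : ℂ) (A : Mat α) (i j : α) :
    (c • (A + σ • Aᵀ)) i j =
      ∑ k, ∑ l, A k l * (c * ((1 : Mat α) i k * (1 : Mat α) j l +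
        σ * ((1 : Mat α) i l * (1 : Mat α) j k))) := by
  simp [one_apply, mul_add, Finset.sum_add_distrib, mul_ite, mul_comm, mul_left_comm]

/- Both identities say that `∑ₘ pₘ Uₘ i j * conj (Uₘ k l) = c (δᵢₖ δⱼₗ + σ δᵢₗ δⱼₖ)`. -/
lemma sum_smul_conj_eq_iff_frameOperator_eq (p : ι → ℝ) (U : ι → Mat α) (c σ : ℂ) :
    (∀ X : Mat α, ∑ m, (p m : ℂ) • (U m * X * (U m)ᴴ) = c • (X.trace • (1 : Mat α) + σ • Xᵀ)) ↔
      ∀ A : Mat α, frameOperator p U A = c • (A + σ • Aᵀ) := by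
  simp only [← Matrix.ext_iff, sum_smul_mul_mul_conjTranspose_apply, frameOperator_apply,
    smul_trace_smul_one_add_smul_transpose_apply, smul_add_smul_transpose_apply]
  rw [forall_comm]
  simp only [@forall_comm (Mat α), forall_sum_sum_mul_eq_iff, funext_iff]
  exact ⟨fun h i j k l => h i k j l, fun h i k j l => h i j k l⟩

end Tensor

section Frame
variable {α ι : Type*} [Fintype α] [Fintype ι] {p : ι → ℝ} {U : ι → Mat α} {σ c : ℂ}

lemma transposeEigenspace_le_span_support (hσ : σ * σ = 1) (hc : c ≠ 0)
    (hF : ∀ A, frameOperator p U A = c • (A + σ • Aᵀ)) :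
    transposeEigenspace α σ ≤ Submodule.span ℂ (Set.range fun m : {m // p m ≠ 0} => U m) := by
  intro A hA
  have hA_eq : A = (2 * c)⁻¹ • frameOperator p U A := by
    rw [hF, mem_transposeEigenspace.mp hA, smul_smul σ σ, hσ, one_smul, smul_smul,
      ← two_smul ℂ A, smul_smul, show (2 * c)⁻¹ * c * 2 = 1 by field_simp, one_smul]
  rw [hA_eq, frameOperator]
  refine Submodule.smul_mem _ _ (Submodule.sum_mem _ fun m _ => ?_)
  by_cases hm : p m = 0
  · simp [hm]
  · exact Submodule.smul_mem _ _ (Submodule.smul_mem _ _ (Submodule.subset_span ⟨⟨m, hm⟩, rfl⟩))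

lemma finrank_transposeEigenspace_le_card_support (hσ : σ * σ = 1) (hc : c ≠ 0)
    (hF : ∀ A, frameOperator p U A = c • (A + σ • Aᵀ)) :
    Module.finrank ℂ (transposeEigenspace α σ) ≤ Fintype.card {m // p m ≠ 0} :=
  (Submodule.finrank_mono (transposeEigenspace_le_span_support hσ hc hF)).trans
    (finrank_range_le_card _)

lemma trace_conjTranspose_mul_eq_zero_of_mem_transposeEigenspace_neg (hσ : σ * σ = 1)
    (hp : ∀ m, 0 ≤ p m) (hF : ∀ A, frameOperator p U A = c • (A + σ • Aᵀ))
    {B : Mat α} (hB : B ∈ transposeEigenspace α (-σ)) {m : ι} (hm : p m ≠ 0) :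
    ((U m)ᴴ * B).trace = 0 := by
  have hzero : frameOperator p U B = 0 := by
    rw [hF, mem_transposeEigenspace.mp hB, smul_smul, mul_neg, hσ, neg_one_smul, add_neg_cancel,
      smul_zero]
  have hsum : ∑ k, (p k : ℂ) * (star ((U k)ᴴ * B).trace * ((U k)ᴴ * B).trace) = 0 := by
    have := congrArg (fun M => (Bᴴ * M).trace) hzero
    simp only [frameOperator, Matrix.mul_sum, Matrix.mul_smul, trace_sum, trace_smul, smul_eq_mul,
      mul_zero, trace_zero] at this
    rw [← this]
    refine Finset.sum_congr rfl fun k _ => ?_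
    rw [star_trace_conjTranspose_mul]
    ring
  have hnonneg : ∀ k ∈ Finset.univ,
      0 ≤ (p k : ℂ) * (star ((U k)ᴴ * B).trace * ((U k)ᴴ * B).trace) :=
    fun k _ => mul_nonneg (by exact_mod_cast hp k) (star_mul_self_nonneg _)
  have hterm := (Finset.sum_eq_zero_iff_of_nonneg hnonneg).mp hsum m (Finset.mem_univ m)
  rw [mul_eq_zero, mul_eq_zero, star_eq_zero, or_self] at hterm
  exact hterm.resolve_left (by exact_mod_cast hm)

lemma mem_transposeEigenspace_of_ne_zero (hσ : σ * σ = 1) (hp : ∀ m, 0 ≤ p m)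
    (hF : ∀ A, frameOperator p U A = c • (A + σ • Aᵀ)) {m : ι} (hm : p m ≠ 0) :
    U m ∈ transposeEigenspace α σ := by
  set K := U m - σ • (U m)ᵀ with hK_def
  have hK : K ∈ transposeEigenspace α (-σ) := by
    rw [mem_transposeEigenspace, hK_def, transpose_sub, transpose_smul, transpose_transpose,
      smul_sub, smul_smul, neg_mul, hσ, neg_smul, neg_smul, one_smul]
    abel
  have hUK : ((U m)ᴴ * K).trace = 0 :=
    trace_conjTranspose_mul_eq_zero_of_mem_transposeEigenspace_neg hσ hp hF hK hm
  have hKK : (Kᴴ * K).trace = 0 := by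
    have hUtK : ((U m)ᵀᴴ * K).trace = 0 := by
      rw [← trace_conjTranspose_mul_transpose, mem_transposeEigenspace.mp hK, Matrix.mul_smul,
        trace_smul, hUK, smul_zero]
    conv_lhs => rw [hK_def]
    rw [conjTranspose_sub, conjTranspose_smul, sub_mul, smul_mul_assoc, trace_sub, trace_smul,
      hUK, hUtK, smul_zero, sub_zero]
  have hU : U m = σ • (U m)ᵀ := sub_eq_zero.mp (trace_conjTranspose_mul_self_eq_zero_iff.mp hKK)
  rw [mem_transposeEigenspace]
  conv_lhs => rw [hU]
  rw [transpose_smul, transpose_transpose]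

lemma trace_conjTranspose_mul_eq_zero_of_linearIndependent [DecidableEq ι] (hσ : σ * σ = 1)
    (hF : ∀ A, frameOperator p U A = c • (A + σ • Aᵀ)) (hU : LinearIndependent ℂ U) {j k : ι}
    (hk : U k ∈ transposeEigenspace α σ) (hj : p j ≠ 0) (hjk : j ≠ k) :
    ((U j)ᴴ * U k).trace = 0 := by
  have hcoord : ∑ m, ((p m : ℂ) * ((U m)ᴴ * U k).trace) • U m =
      ∑ m, (if m = k then 2 * c else 0) • U m := by
    simp only [ite_smul, zero_smul, Finset.sum_ite_eq', Finset.mem_univ, if_true, ← smul_smul]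
    rw [← frameOperator, hF, mem_transposeEigenspace.mp hk, smul_smul σ σ, hσ, one_smul]
    module
  have := Fintype.linearIndependent_iffₛ.mp hU _ _ hcoord j
  rw [if_neg hjk, mul_eq_zero] at this
  exact this.resolve_left (by exact_mod_cast hj)

lemma frameOperator_inv_card_eq [DecidableEq α] [Nonempty ι] (hσ : σ * σ = 1)
    (hcN : 2 * c * Fintype.card ι = Fintype.card α)
    (hUuni : ∀ k, U k ∈ unitaryGroup α ℂ) (hUσ : ∀ k, U k ∈ transposeEigenspace α σ)
    (horth : ∀ j k, j ≠ k → ((U j)ᴴ * U k).trace = 0)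
    (hspan : transposeEigenspace α σ ≤ Submodule.span ℂ (Set.range U)) (A : Mat α) :
    frameOperator (fun _ => (Fintype.card ι : ℝ)⁻¹) U A = c • (A + σ • Aᵀ) := by
  have hexp := sum_trace_smul_eq_smul_of_mem_span horth
    (fun k => trace_conjTranspose_mul_self_of_mem_unitaryGroup (hUuni k))
    (hspan (add_smul_transpose_mem_transposeEigenspace hσ A))
  have hcoef : ∀ m, ((U m)ᴴ * (A + σ • Aᵀ)).trace = 2 * ((U m)ᴴ * A).trace := by
    intro m
    rw [Matrix.mul_add, Matrix.mul_smul, trace_add, trace_smul,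
      trace_conjTranspose_mul_transpose_of_mem_transposeEigenspace hσ (hUσ m), smul_eq_mul,
      ← mul_assoc, hσ]
    ring
  simp only [hcoef, ← smul_smul, ← Finset.smul_sum] at hexp
  have hN : (Fintype.card ι : ℂ) ≠ 0 := Nat.cast_ne_zero.mpr Fintype.card_ne_zero
  have hsum : ∑ m, ((U m)ᴴ * A).trace • U m = (Fintype.card ι * c) • (A + σ • Aᵀ) := by
    apply smul_right_injective (Mat α) (two_ne_zero (α := ℂ))
    simp only [hexp, ← hcN, smul_smul]
    ring_nf
  rw [frameOperator, ← Finset.smul_sum, hsum, smul_smul]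
  push_cast
  rw [inv_mul_cancel_left₀ hN]

end Frame

lemma Sym2.inf_eq_sup_iff_isDiag {α : Type*} [LinearOrder α] (z : Sym2 α) :
    z.inf = z.sup ↔ z.IsDiag := by
  induction z with | _ a b => simp

section Dimension
variable {α : Type*} [LinearOrder α] {σ : ℂ}

def symmetrizedSingle (σ : ℂ) (z : Sym2 α) : Mat α :=
  single z.inf z.sup 1 + σ • single z.sup z.inf 1

lemma symmetrizedSingle_mem_transposeEigenspace (hσ : σ * σ = 1) (z : Sym2 α) :
    symmetrizedSingle σ z ∈ transposeEigenspace α σ := by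
  rw [mem_transposeEigenspace, symmetrizedSingle, transpose_add, transpose_smul,
    transpose_single, transpose_single, smul_add, smul_smul, hσ, one_smul, add_comm]

lemma symmetrizedSingle_apply_inf_sup (z w : Sym2 α) :
    symmetrizedSingle σ z w.inf w.sup = if z = w then (if z.IsDiag then 1 + σ else 1) else 0 := by
  by_cases hzw : z = w
  · subst hzw
    by_cases hd : z.IsDiag
    · simp [symmetrizedSingle, hd, (z.inf_eq_sup_iff_isDiag).mpr hd]
    · have hne : z.inf ≠ z.sup := mt z.inf_eq_sup_iff_isDiag.mp hd
      simp [symmetrizedSingle, hd, hne, hne.symm]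
  · have hsame : ¬(z.inf = w.inf ∧ z.sup = w.sup) := fun h =>
      hzw (Sym2.inf_eq_inf_and_sup_eq_sup.mp h)
    have hflip : ¬(z.sup = w.inf ∧ z.inf = w.sup) := fun ⟨h₁, h₂⟩ => by
      have := z.inf_le_sup; have := w.inf_le_sup
      exact hsame ⟨by order, by order⟩
    simp [symmetrizedSingle, hsame, hflip, hzw]

lemma linearIndependent_symmetrizedSingle_comp {ι : Type*} {e : ι → Sym2 α}
    (he : Function.Injective e) (hσ : ∀ i, (e i).IsDiag → 1 + σ ≠ 0) :
    LinearIndependent ℂ (symmetrizedSingle σ ∘ e) := by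
  classical
  let entries : Mat α →ₗ[ℂ] ι → ℂ :=
    { toFun := fun M i => M (e i).inf (e i).sup
      map_add' := fun _ _ => rfl
      map_smul' := fun _ _ => rfl }
  refine LinearIndependent.of_comp entries ?_
  have hentries : entries ∘ (symmetrizedSingle σ ∘ e) =
      fun i => Pi.single i (if (e i).IsDiag then 1 + σ else 1) := by
    ext i j
    change symmetrizedSingle σ (e i) (e j).inf (e j).sup = _
    simp only [symmetrizedSingle_apply_inf_sup, he.eq_iff, Pi.single_apply, eq_comm (a := i)]
  rw [hentries]
  refine Pi.linearIndependent_single_of_ne_zero fun i => ?_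
  split_ifs with h
  exacts [hσ i h, one_ne_zero]

variable [Fintype α]

lemma card_le_finrank_transposeEigenspace {ι : Type*} [Fintype ι] (hσ : σ * σ = 1)
    {e : ι → Sym2 α} (he : Function.Injective e) (hdiag : ∀ i, (e i).IsDiag → 1 + σ ≠ 0) :
    Fintype.card ι ≤ Module.finrank ℂ (transposeEigenspace α σ) := by
  rw [← finrank_span_eq_card (linearIndependent_symmetrizedSingle_comp he hdiag)]
  exact Submodule.finrank_mono (Submodule.span_le.mpr (Set.range_subset_iff.mpr fun i =>
    symmetrizedSingle_mem_transposeEigenspace hσ (e i)))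

lemma choose_two_le_finrank_transposeEigenspace_one :
    (Fintype.card α + 1).choose 2 ≤ Module.finrank ℂ (transposeEigenspace α 1) := by
  rw [← Sym2.card]
  exact card_le_finrank_transposeEigenspace (one_mul 1) Function.injective_id
    fun _ _ => by norm_num

lemma choose_two_le_finrank_transposeEigenspace_neg_one :
    (Fintype.card α).choose 2 ≤ Module.finrank ℂ (transposeEigenspace α (-1)) := by
  rw [← Sym2.card_subtype_not_diag]
  exact card_le_finrank_transposeEigenspace (by norm_num) Subtype.val_injective
    fun i hi => absurd hi i.2

end Dimension

section MixedUnitaryRank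
variable {α : Type*} [Fintype α] [DecidableEq α] {Φ : Mat α →ₗ[ℂ] Mat α} {σ c : ℂ} {N : ℕ}
  {p : Fin N → ℝ} {U : Fin N → Mat α}

def IsUnitaryOrthogonalBasis {ι : Type*} (σ : ℂ) (U : ι → Mat α) : Prop :=
  (∀ k, U k ∈ unitaryGroup α ℂ) ∧ (∀ k, U k ∈ transposeEigenspace α σ) ∧
    (∀ j k, j ≠ k → ((U j)ᴴ * U k).trace = 0) ∧
    transposeEigenspace α σ ≤ Submodule.span ℂ (Set.range U)

lemma mixedUnitaryRank_le (h : IsMixedUnitaryDecomp Φ p U) : mixedUnitaryRank Φ ≤ N :=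
  Nat.sInf_le ⟨p, U, h⟩

lemma IsMixedUnitary.exists_decomp_mixedUnitaryRank (h : IsMixedUnitary Φ) :
    ∃ (p : Fin (mixedUnitaryRank Φ) → ℝ) (U : Fin (mixedUnitaryRank Φ) → Mat α),
      IsMixedUnitaryDecomp Φ p U :=
  Nat.sInf_mem h

lemma IsMixedUnitaryDecomp.frameOperator_eq
    (hΦ : ∀ X : Mat α, Φ X = c • (X.trace • (1 : Mat α) + σ • Xᵀ))
    (h : IsMixedUnitaryDecomp Φ p U) (A : Mat α) :
    frameOperator p U A = c • (A + σ • Aᵀ) :=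
  (sum_smul_conj_eq_iff_frameOperator_eq p U c σ).mp (fun X => (h.2.2.2 X).symm.trans (hΦ X)) A

lemma IsMixedUnitaryDecomp.finrank_transposeEigenspace_le (hσ : σ * σ = 1) (hc : c ≠ 0)
    (hΦ : ∀ X : Mat α, Φ X = c • (X.trace • (1 : Mat α) + σ • Xᵀ))
    (h : IsMixedUnitaryDecomp Φ p U) : Module.finrank ℂ (transposeEigenspace α σ) ≤ N :=
  (finrank_transposeEigenspace_le_card_support hσ hc (h.frameOperator_eq hΦ)).trans
    ((Fintype.card_subtype_le _).trans_eq (Fintype.card_fin N))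

lemma IsMixedUnitaryDecomp.isUnitaryOrthogonalBasis (hσ : σ * σ = 1) (hc : c ≠ 0)
    (hN : N ≤ Module.finrank ℂ (transposeEigenspace α σ))
    (hΦ : ∀ X : Mat α, Φ X = c • (X.trace • (1 : Mat α) + σ • Xᵀ))
    (h : IsMixedUnitaryDecomp Φ p U) : IsUnitaryOrthogonalBasis σ U := by
  have hF := h.frameOperator_eq hΦ
  have hp : ∀ m, p m ≠ 0 := fun m hm =>
    (Fintype.card_subtype_lt (p := fun m => p m ≠ 0) (not_not.mpr hm)).not_ge <| by
      simpa using hN.trans (finrank_transposeEigenspace_le_card_support hσ hc hF)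
  have hmem : ∀ m, U m ∈ transposeEigenspace α σ :=
    fun m => mem_transposeEigenspace_of_ne_zero hσ h.1 hF (hp m)
  have hspan : transposeEigenspace α σ ≤ Submodule.span ℂ (Set.range U) :=
    (transposeEigenspace_le_span_support hσ hc hF).trans
      (Submodule.span_mono (Set.range_comp_subset_range _ U))
  have hli : LinearIndependent ℂ U := by
    rw [linearIndependent_iff_card_eq_finrank_span, Fintype.card_fin]
    exact le_antisymm (hN.trans (Submodule.finrank_mono hspan))
      (by simpa using finrank_range_le_card (R := ℂ) U)
  exact ⟨h.2.2.1, hmem, fun j k hjk =>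
    trace_conjTranspose_mul_eq_zero_of_linearIndependent hσ hF hli (hmem k) (hp j) hjk, hspan⟩

lemma IsUnitaryOrthogonalBasis.isMixedUnitaryDecomp [NeZero N] (hσ : σ * σ = 1)
    (hcN : 2 * c * N = Fintype.card α)
    (hΦ : ∀ X : Mat α, Φ X = c • (X.trace • (1 : Mat α) + σ • Xᵀ))
    (hU : IsUnitaryOrthogonalBasis σ U) :
    IsMixedUnitaryDecomp Φ (fun _ => (Fintype.card (Fin N) : ℝ)⁻¹) U := by
  obtain ⟨huni, hmem, horth, hspan⟩ := hU
  refine ⟨fun _ => by positivity, by simp [Finset.card_univ], huni, fun X => ?_⟩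
  rw [hΦ]
  refine ((sum_smul_conj_eq_iff_frameOperator_eq _ U c σ).mpr ?_ X).symm
  exact frameOperator_inv_card_eq hσ (by rwa [Fintype.card_fin]) huni hmem horth hspan

theorem isMixedUnitary_and_mixedUnitaryRank_eq_iff [Nonempty α] (hσ : σ * σ = 1)
    (hcN : 2 * c * N = Fintype.card α) (hN : N ≤ Module.finrank ℂ (transposeEigenspace α σ))
    (hΦ : ∀ X : Mat α, Φ X = c • (X.trace • (1 : Mat α) + σ • Xᵀ)) :
    (IsMixedUnitary Φ ∧ mixedUnitaryRank Φ = N) ↔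
      ∃ U : Fin N → Mat α, IsUnitaryOrthogonalBasis σ U := by
  have hc : c ≠ 0 := by
    rintro rfl
    simp [eq_comm] at hcN
  constructor
  · rintro ⟨hmu, rfl⟩
    obtain ⟨p, U, hU⟩ := hmu.exists_decomp_mixedUnitaryRank
    exact ⟨U, hU.isUnitaryOrthogonalBasis hσ hc hN hΦ⟩
  · rintro ⟨U, hU⟩
    have : NeZero N := ⟨by rintro rfl; simp [eq_comm] at hcN⟩
    have hdec := hU.isMixedUnitaryDecomp hσ hcN hΦ
    refine ⟨⟨N, _, _, hdec⟩, le_antisymm (mixedUnitaryRank_le hdec) ?_⟩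
    obtain ⟨q, V, hV⟩ := IsMixedUnitary.exists_decomp_mixedUnitaryRank ⟨N, _, _, hdec⟩
    exact hN.trans (hV.finrank_transposeEigenspace_le hσ hc hΦ)

end MixedUnitaryRank

/-- Theorem 8 of the paper. (1) The symmetric Werner--Holevo channel
`Φ₀` on `M_n` has mixed-unitary rank `n(n+1)/2` iff there is an orthogonal basis of the
symmetric matrices consisting of unitaries; (2) for even `n`, the anti-symmetric
Werner--Holevo channel `Φ₁` has mixed-unitary rank `n(n-1)/2` iff there is an orthogonal
basis of the skew-symmetric matrices consisting of unitaries. -/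
theorem stmt15 (n : ℕ) (hn : 0 < n)
    (Φ₀ Φ₁ : Mat (Fin n) →ₗ[ℂ] Mat (Fin n))
    (hΦ₀ : ∀ X, Φ₀ X = ((n : ℂ) + 1)⁻¹ • (X.trace • (1 : Mat (Fin n)) + Xᵀ))
    (hΦ₁ : ∀ X, Φ₁ X = ((n : ℂ) - 1)⁻¹ • (X.trace • (1 : Mat (Fin n)) - Xᵀ)) :
    ((IsMixedUnitary Φ₀ ∧ mixedUnitaryRank Φ₀ = n * (n + 1) / 2) ↔
      ∃ U : Fin (n * (n + 1) / 2) → Mat (Fin n),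
        (∀ k, U k ∈ Matrix.unitaryGroup (Fin n) ℂ) ∧
        (∀ k, (U k)ᵀ = U k) ∧
        (∀ j k, j ≠ k → ((U j)ᴴ * U k).trace = 0) ∧
        (∀ A : Mat (Fin n), Aᵀ = A → A ∈ Submodule.span ℂ (Set.range U))) ∧
    (Even n →
      ((IsMixedUnitary Φ₁ ∧ mixedUnitaryRank Φ₁ = n * (n - 1) / 2) ↔
        ∃ U : Fin (n * (n - 1) / 2) → Mat (Fin n),
          (∀ k, U k ∈ Matrix.unitaryGroup (Fin n) ℂ) ∧
          (∀ k, (U k)ᵀ = -(U k)) ∧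
          (∀ j k, j ≠ k → ((U j)ᴴ * U k).trace = 0) ∧
          (∀ A : Mat (Fin n), Aᵀ = -A → A ∈ Submodule.span ℂ (Set.range U)))) := by
  have : Nonempty (Fin n) := Fin.pos_iff_nonempty.mp hn
  constructor
  · have hcN : 2 * ((n : ℂ) + 1)⁻¹ * ((n * (n + 1) / 2 : ℕ) : ℂ) = Fintype.card (Fin n) := by
      rw [Nat.cast_div (Nat.even_mul_succ_self n).two_dvd two_ne_zero, Fintype.card_fin]
      push_cast
      field_simp
    have hN : n * (n + 1) / 2 ≤ Module.finrank ℂ (transposeEigenspace (Fin n) 1) := by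
      simpa [Nat.choose_two_right, mul_comm] using
        choose_two_le_finrank_transposeEigenspace_one (α := Fin n)
    simpa only [IsUnitaryOrthogonalBasis, SetLike.le_def, mem_transposeEigenspace, one_smul] using
      isMixedUnitary_and_mixedUnitaryRank_eq_iff (one_mul 1) hcN hN fun X => by rw [hΦ₀, one_smul]
  · intro hev
    have hn1 : (n : ℂ) - 1 ≠ 0 := sub_ne_zero.mpr (by exact_mod_cast (by grind : n ≠ 1))
    have hcN : 2 * ((n : ℂ) - 1)⁻¹ * ((n * (n - 1) / 2 : ℕ) : ℂ) = Fintype.card (Fin n) := by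
      rw [Nat.cast_div (hev.mul_right _).two_dvd two_ne_zero, Fintype.card_fin, Nat.cast_mul,
        Nat.cast_sub hn]
      push_cast
      field_simp
    have hN : n * (n - 1) / 2 ≤ Module.finrank ℂ (transposeEigenspace (Fin n) (-1)) := by
      simpa [Nat.choose_two_right] using
        choose_two_le_finrank_transposeEigenspace_neg_one (α := Fin n)
    simpa only [IsUnitaryOrthogonalBasis, SetLike.le_def, mem_transposeEigenspace,
      neg_one_smul] using
      isMixedUnitary_and_mixedUnitaryRank_eq_iff (by norm_num) hcN hN
        fun X => by rw [hΦ₁, neg_one_smul, ← sub_eq_add_neg]
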